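/- arXiv:1208.4749 — 5 statements merged into one kernel-verified Lean document; each statement's English description precedes it below -/
import Mathlib

section
/- Let G be a group possessing a composition series, and let H and K be any two composition series of G (they have the same length n by the Jordan–Hölder theorem). Then the set CSL(H,K) = {H_i ∩ K_j : 0 ≤ i, j ≤ n}, partially ordered by reverse inclusion ⊇, is a lattice that is slim and semimodular (equivalently, CSL(H,K) under inclusion is a dually slim, dually semimodular lattice). -/
/-!
Write `X i j = H i ⊓ K j`. Going down from `q = n`, each `H p ⊔ H (p+1) ⊓ K q` is normal in the
previous one (Zassenhaus), so by maximality of `H p` in `H (p+1)` it is `H p` or `H (p+1)`; this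
pairs every factor of `H` with exactly one factor of `K`, and the pairing is symmetric (butterfly
lemma). Hence the set of indices `p` with `A ⊓ H (p+1) ⊄ H p` is, on `CSL H K`, strictly monotone
and meet-preserving, and it gains at most one index along a cover. Given `A ⋖ A ⊔ B`, the indices
gained from `A ⊓ B` to `B` are among those gained from `A` to `A ⊔ B`, so `A ⊓ B ⋖ B`: `CSL H K` is
lower semimodular, i.e. its dual is semimodular. The dual is slim because `X i j = X i n ⊓ X n j`,
so every meet-irreducible element lies on one of the two chains `(H i)` and `(K j)`.
-/

/-- `p` is join-irreducible: `p ≠ ⊥` and `p = a ⊔ b` implies `p = a` or `p = b`. -/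
def JoinIrred {L : Type*} [Lattice L] [OrderBot L] (p : L) : Prop :=
  p ≠ ⊥ ∧ ∀ a b : L, p = a ⊔ b → p = a ∨ p = b

/-- A lattice is slim if its join-irreducible elements contain no three-element antichain. -/
def Slim (L : Type*) [Lattice L] [OrderBot L] : Prop :=
  ¬ ∃ a b c : L, JoinIrred a ∧ JoinIrred b ∧ JoinIrred c ∧
    ¬ a ≤ b ∧ ¬ b ≤ a ∧ ¬ a ≤ c ∧ ¬ c ≤ a ∧ ¬ b ≤ c ∧ ¬ c ≤ b

/-- A lattice is (upper) semimodular if `a ⊓ b ⋖ a` implies `b ⋖ a ⊔ b`. -/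
def Semimodular (L : Type*) [Lattice L] : Prop :=
  ∀ a b : L, a ⊓ b ⋖ a → b ⋖ a ⊔ b

/-- A composition series of `G` of length `n`. -/
def IsCompositionSeries {G : Type*} [Group G] {n : ℕ} (H : Fin (n + 1) → Subgroup G) : Prop :=
  H 0 = ⊥ ∧ H (Fin.last n) = ⊤ ∧
    ∀ i : Fin n,
      H i.castSucc < H i.succ ∧
      ((H i.castSucc).subgroupOf (H i.succ)).Normal ∧
      ∀ N : Subgroup G, N ≤ H i.succ → (N.subgroupOf (H i.succ)).Normal →
        H i.castSucc ≤ N → N = H i.castSucc ∨ N = H i.succ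

/-- `CSL H K` is the set `{H i ∩ K j}` of subgroups, ordered by inclusion. -/
def CSL {G : Type*} [Group G] {n : ℕ} (H K : Fin (n + 1) → Subgroup G) : Set (Subgroup G) :=
  {A | ∃ i j : Fin (n + 1), A = H i ⊓ K j}

theorem Fin.exists_castSucc_succ_of_le {n : ℕ} {P : Fin (n + 1) → Prop} {a b : Fin (n + 1)}
    (hab : a ≤ b) (ha : P a) (hb : ¬ P b) :
    ∃ p : Fin n, a ≤ p.castSucc ∧ p.succ ≤ b ∧ P p.castSucc ∧ ¬ P p.succ := by
  induction b using Fin.induction with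
  | zero => exact absurd (le_antisymm hab (Fin.zero_le a) ▸ ha) hb
  | succ q ih =>
    have haq : a ≤ q.castSucc :=
      Fin.le_castSucc_iff.2 (lt_of_le_of_ne hab fun h => hb (h ▸ ha))
    by_cases hq : P q.castSucc
    · exact ⟨q, haq, le_rfl, hq, hb⟩
    · obtain ⟨p, hap, hpq, hp, hp'⟩ := ih haq hq
      exact ⟨p, hap, hpq.trans q.castSucc_lt_succ.le, hp, hp'⟩

theorem Monotone.map_min_eq_inf {α β : Type*} [LinearOrder α] [SemilatticeInf β] {f : α → β}
    (hf : Monotone f) (a b : α) : f (min a b) = f a ⊓ f b := by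
  rcases le_total a b with h | h
  · rw [min_eq_left h, inf_eq_left.2 (hf h)]
  · rw [min_eq_right h, inf_eq_right.2 (hf h)]

theorem slim_of_joinIrred_subset_union {L : Type*} [Lattice L] [OrderBot L] {s t : Set L}
    (hs : IsChain (· ≤ ·) s) (ht : IsChain (· ≤ ·) t) (h : ∀ a, JoinIrred a → a ∈ s ∪ t) :
    Slim L := by
  rintro ⟨a, b, c, ha, hb, hc, hab, hba, hac, hca, hbc, hcb⟩
  have comparable : ∀ {x y}, x ∈ s ∪ t → y ∈ s ∪ t → (x ∈ s ↔ y ∈ s) → x ≤ y ∨ y ≤ x := by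
    intro x y hx hy hxy
    by_cases hxs : x ∈ s
    · exact hs.total hxs (hxy.1 hxs)
    · exact ht.total (hx.resolve_left hxs) (hy.resolve_left (mt hxy.2 hxs))
  by_cases hab' : a ∈ s ↔ b ∈ s
  · exact (comparable (h a ha) (h b hb) hab').elim hab hba
  by_cases hac' : a ∈ s ↔ c ∈ s
  · exact (comparable (h a ha) (h c hc) hac').elim hac hca
  exact (comparable (h b hb) (h c hc) (by tauto)).elim hbc hcb

section OrderIso

variable {α β : Type*} [Lattice α] [Lattice β]

theorem JoinIrred.map [OrderBot α] [OrderBot β] {a : α} (ha : JoinIrred a) (e : α ≃o β) :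
    JoinIrred (e a) := by
  refine ⟨fun h => ha.1 ((map_eq_bot_iff e).1 h), fun x y hxy => ?_⟩
  have := ha.2 (e.symm x) (e.symm y) (e.injective (by rw [e.map_sup, e.apply_symm_apply,
    e.apply_symm_apply, hxy]))
  exact this.imp (fun h => by rw [h, e.apply_symm_apply]) fun h => by rw [h, e.apply_symm_apply]

theorem Slim.of_orderIso [OrderBot α] [OrderBot β] (h : Slim α) (e : α ≃o β) : Slim β := by
  rintro ⟨a, b, c, ha, hb, hc, hab⟩
  refine h ⟨e.symm a, e.symm b, e.symm c, ha.map e.symm, hb.map e.symm, hc.map e.symm, ?_⟩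
  simpa only [OrderIso.le_iff_le] using hab

theorem Semimodular.of_orderIso (h : Semimodular α) (e : α ≃o β) : Semimodular β := by
  intro a b hab
  have := h (e.symm a) (e.symm b) (by rwa [← e.symm.map_inf, apply_covBy_apply_iff])
  rwa [← apply_covBy_apply_iff e, e.map_sup, e.apply_symm_apply, e.apply_symm_apply] at this

end OrderIso

theorem exists_orderIso_of_finite (α : Type*) [Lattice α] [Finite α] [Nonempty α] :
    ∃ (L : Type) (_ : Lattice L) (_ : Fintype L) (_ : BoundedOrder L), Nonempty (α ≃o L) := by
  let e := (equivShrink.{0} α).symm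
  let _ : Lattice (Shrink.{0} α) := e.lattice
  let _ : Nonempty (Shrink.{0} α) := e.nonempty
  let _ := Fintype.ofFinite (Shrink.{0} α)
  exact ⟨Shrink α, inferInstance, inferInstance, Fintype.toBoundedOrder _, ⟨orderIsoShrink.{0} α⟩⟩

namespace Subgroup

variable {G : Type*} [Group G]

theorem sup_inf_le_normalizer_sup_inf {A B C D : Subgroup G} (hB : B ≤ normalizer A)
    (hD : D ≤ normalizer C) : A ⊔ B ⊓ D ≤ normalizer (A ⊔ B ⊓ C : Subgroup G) :=
  sup_le (le_sup_left.trans le_normalizer) <|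
    (le_inf (inf_le_left.trans hB)
      ((inf_le_inf le_normalizer hD).trans inf_normalizer_le_normalizer_inf)).trans
      (normalizer_inf_normalizer_le_normalizer_sup _ _)

end Subgroup

open Subgroup

namespace IsCompositionSeries

variable {G : Type*} [Group G] {n : ℕ} {H K : Fin (n + 1) → Subgroup G}

theorem monotone (hH : IsCompositionSeries H) : Monotone H :=
  (Fin.strictMono_iff_lt_succ.2 fun i => (hH.2.2 i).1).monotone

theorem le_normalizer (hH : IsCompositionSeries H) (p : Fin n) :
    H p.succ ≤ normalizer (H p.castSucc : Set G) :=
  (normal_subgroupOf_iff_le_normalizer (hH.monotone p.castSucc_le_succ)).1 (hH.2.2 p).2.1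

theorem sup_inf_eq_or_eq (hH : IsCompositionSeries H) (hK : IsCompositionSeries K)
    (p : Fin n) (q : Fin (n + 1)) :
    H p.castSucc ⊔ H p.succ ⊓ K q = H p.castSucc ∨ H p.castSucc ⊔ H p.succ ⊓ K q = H p.succ := by
  induction q using Fin.reverseInduction with
  | last => right; rw [hK.2.1, inf_top_eq, sup_of_le_right (hH.monotone p.castSucc_le_succ)]
  | cast q ih =>
    have hle : H p.castSucc ⊔ H p.succ ⊓ K q.castSucc ≤ H p.castSucc ⊔ H p.succ ⊓ K q.succ :=
      sup_le_sup_left (inf_le_inf_left _ (hK.monotone q.castSucc_le_succ)) _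
    rcases ih with h | h
    · exact Or.inl (le_antisymm (hle.trans_eq h) le_sup_left)
    · refine (hH.2.2 p).2.2 _ (hle.trans_eq h) ?_ le_sup_left
      rw [normal_subgroupOf_iff_le_normalizer (hle.trans_eq h)]
      exact h.ge.trans (sup_inf_le_normalizer_sup_inf (hH.le_normalizer p) (hK.le_normalizer q))

end IsCompositionSeries

section FactorsMatch

variable {G : Type*} [Group G] {n : ℕ} {H K : Fin (n + 1) → Subgroup G}

/-- Zassenhaus' butterfly condition: the `p`-th factor of `H` and the `q`-th factor of `K` are
paired by the Jordan–Hölder correspondence. -/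
def FactorsMatch (H K : Fin (n + 1) → Subgroup G) (p q : Fin n) : Prop :=
  ¬ H p.succ ⊓ K q.succ ≤ H p.castSucc ⊓ K q.succ ⊔ H p.succ ⊓ K q.castSucc

theorem factorsMatch_comm {p q : Fin n} : FactorsMatch H K p q ↔ FactorsMatch K H q p := by
  rw [FactorsMatch, FactorsMatch, inf_comm (H p.succ), inf_comm (H p.castSucc),
    inf_comm (H p.succ) (K q.castSucc), sup_comm]

theorem factorsMatch_iff (hH : IsCompositionSeries H) (hK : IsCompositionSeries K) {p q : Fin n} :
    FactorsMatch H K p q ↔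
      H p.succ ⊓ K q.castSucc ≤ H p.castSucc ∧ ¬ H p.succ ⊓ K q.succ ≤ H p.castSucc := by
  refine ⟨fun h => ⟨?_, fun hle => h (le_sup_of_le_left (le_inf hle inf_le_right))⟩,
    fun ⟨hq, hq'⟩ h => hq' (h.trans (sup_le inf_le_left hq))⟩
  by_contra hq
  have hsup := (hH.sup_inf_eq_or_eq hK p q.castSucc).resolve_left fun e => hq (e ▸ le_sup_right)
  refine h fun x hx => ?_
  obtain ⟨hxH, hxK⟩ := mem_inf.1 hx
  have hx' : x ∈ (↑(H p.castSucc ⊔ H p.succ ⊓ K q.castSucc) : Set G) := hsup.symm ▸ hxH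
  rw [coe_mul_of_right_le_normalizer_left _ _ (inf_le_left.trans (hH.le_normalizer p))] at hx'
  obtain ⟨a, ha, b, hb, rfl⟩ := hx'
  have haK : a ∈ K q.succ := by
    simpa using mul_mem hxK (inv_mem (hK.monotone q.castSucc_le_succ (mem_inf.1 hb).2))
  exact mul_mem_sup ⟨ha, haK⟩ hb

theorem exists_factorsMatch (hH : IsCompositionSeries H) (hK : IsCompositionSeries K)
    {p : Fin n} {j : Fin (n + 1)} (h : ¬ H p.succ ⊓ K j ≤ H p.castSucc) :
    ∃ q : Fin n, q.succ ≤ j ∧ FactorsMatch H K p q := by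
  obtain ⟨q, -, hqj, hq, hq'⟩ := Fin.exists_castSucc_succ_of_le
    (P := fun t => H p.succ ⊓ K t ≤ H p.castSucc) (Fin.zero_le j) (by simp [hK.1]) h
  exact ⟨q, hqj, (factorsMatch_iff hH hK).2 ⟨hq, hq'⟩⟩

theorem FactorsMatch.right_unique (hH : IsCompositionSeries H) (hK : IsCompositionSeries K)
    {p q q' : Fin n} (h : FactorsMatch H K p q) (h' : FactorsMatch H K p q') : q = q' := by
  rw [factorsMatch_iff hH hK] at h h'
  have not_lt_of : ∀ {r r' : Fin n}, ¬ H p.succ ⊓ K r.succ ≤ H p.castSucc →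
      H p.succ ⊓ K r'.castSucc ≤ H p.castSucc → ¬ r < r' := fun hr hr' hlt =>
    hr ((inf_le_inf_left _ (hK.monotone (Fin.succ_le_castSucc_iff.2 hlt))).trans hr')
  exact le_antisymm (not_lt.1 (not_lt_of h'.2 h.1)) (not_lt.1 (not_lt_of h.2 h'.1))

theorem FactorsMatch.left_unique (hH : IsCompositionSeries H) (hK : IsCompositionSeries K)
    {p p' q : Fin n} (h : FactorsMatch H K p q) (h' : FactorsMatch H K p' q) : p = p' :=
  (factorsMatch_comm.1 h).right_unique hK hH (factorsMatch_comm.1 h')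

end FactorsMatch

section NontrivialFactors

variable {G : Type*} [Group G] {n : ℕ} {H K : Fin (n + 1) → Subgroup G}

def nontrivialFactors (H : Fin (n + 1) → Subgroup G) (A : Subgroup G) : Set (Fin n) :=
  {p | ¬ A ⊓ H p.succ ≤ H p.castSucc}

theorem nontrivialFactors_mono : Monotone (nontrivialFactors H) :=
  fun _ _ hAB _ hp h => hp ((inf_le_inf_right _ hAB).trans h)

theorem mem_nontrivialFactors_inf (hH : Monotone H) {p : Fin n} {i : Fin (n + 1)}
    {B : Subgroup G} :
    p ∈ nontrivialFactors H (H i ⊓ B) ↔ p.succ ≤ i ∧ ¬ H p.succ ⊓ B ≤ H p.castSucc := by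
  by_cases hpi : p.succ ≤ i
  · rw [nontrivialFactors, Set.mem_ofPred_eq, inf_right_comm, inf_eq_right.2 (hH hpi)]
    exact (and_iff_right hpi).symm
  · simp only [nontrivialFactors, Set.mem_ofPred_eq, hpi, false_and, iff_false, not_not]
    exact inf_le_left.trans (inf_le_left.trans (hH (Fin.le_castSucc_iff.2 (not_le.1 hpi))))

theorem nontrivialFactors_succ_inf_sdiff_subset (hH : Monotone H) (p : Fin n) (B : Subgroup G) :
    nontrivialFactors H (H p.succ ⊓ B) \ nontrivialFactors H (H p.castSucc ⊓ B) ⊆ {p} := by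
  rintro r ⟨hr, hr'⟩
  rw [mem_nontrivialFactors_inf hH] at hr hr'
  exact le_antisymm (Fin.succ_le_succ_iff.1 hr.1)
    (not_lt.1 fun hlt => hr' ⟨Fin.succ_le_castSucc_iff.2 hlt, hr.2⟩)

theorem nontrivialFactors_inf_succ_sdiff_subset (hH : IsCompositionSeries H)
    (hK : IsCompositionSeries K) (i : Fin (n + 1)) (q : Fin n) :
    nontrivialFactors H (H i ⊓ K q.succ) \ nontrivialFactors H (H i ⊓ K q.castSucc) ⊆
      {p | FactorsMatch H K p q} := by
  rintro p ⟨hp, hp'⟩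
  rw [mem_nontrivialFactors_inf hH.monotone] at hp hp'
  exact (factorsMatch_iff hH hK).2 ⟨not_not.1 fun h => hp' ⟨hp.1, h⟩, hp.2⟩

theorem inf_eq_of_nontrivialFactors_eq_left (hH : Monotone H) {a i : Fin (n + 1)} (hai : a ≤ i)
    (B : Subgroup G) (h : nontrivialFactors H (H a ⊓ B) = nontrivialFactors H (H i ⊓ B)) :
    H a ⊓ B = H i ⊓ B := by
  refine le_antisymm (inf_le_inf_right _ (hH hai)) (le_inf ?_ inf_le_right)
  by_contra hi
  obtain ⟨p, hap, hpi, hp, hp'⟩ :=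
    Fin.exists_castSucc_succ_of_le (P := fun t => H t ⊓ B ≤ H a) hai inf_le_left hi
  have hmem : p ∈ nontrivialFactors H (H i ⊓ B) :=
    (mem_nontrivialFactors_inf hH).2 ⟨hpi, fun hle => hp' ((le_inf hle inf_le_right).trans hp)⟩
  rw [← h, mem_nontrivialFactors_inf hH] at hmem
  exact (hmem.1.trans hap).not_gt p.castSucc_lt_succ

/-- A jump of `H a ⊓ K t` at `t = q` is detected by the factor of `H` matched with the `q`-th
factor of `K`. -/
theorem inf_eq_of_nontrivialFactors_eq_right (hH : IsCompositionSeries H)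
    (hK : IsCompositionSeries K) {a b j : Fin (n + 1)} (hbj : b ≤ j)
    (h : nontrivialFactors H (H a ⊓ K b) = nontrivialFactors H (H a ⊓ K j)) :
    H a ⊓ K b = H a ⊓ K j := by
  refine le_antisymm (inf_le_inf_left _ (hK.monotone hbj)) (le_inf inf_le_left ?_)
  by_contra hj
  obtain ⟨q, hbq, hqj, hq, hq'⟩ :=
    Fin.exists_castSucc_succ_of_le (P := fun t => H a ⊓ K t ≤ K b) hbj inf_le_right hj
  obtain ⟨p, hpa, hpq⟩ := exists_factorsMatch hK hH (p := q) (j := a) fun hle =>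
    hq' ((le_inf inf_le_left ((inf_comm _ _).le.trans hle)).trans hq)
  rw [← factorsMatch_comm, factorsMatch_iff hH hK] at hpq
  have hmem : p ∈ nontrivialFactors H (H a ⊓ K j) := (mem_nontrivialFactors_inf hH.monotone).2
    ⟨hpa, fun hle => hpq.2 ((inf_le_inf_left _ (hK.monotone hqj)).trans hle)⟩
  rw [← h, mem_nontrivialFactors_inf hH.monotone] at hmem
  exact hmem.2 ((inf_le_inf_left _ (hK.monotone hbq)).trans hpq.1)

theorem inf_eq_of_nontrivialFactors_eq (hH : IsCompositionSeries H) (hK : IsCompositionSeries K)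
    {a b i j : Fin (n + 1)} (hai : a ≤ i) (hbj : b ≤ j)
    (h : nontrivialFactors H (H a ⊓ K b) = nontrivialFactors H (H i ⊓ K j)) :
    H a ⊓ K b = H i ⊓ K j := by
  have h₁ : nontrivialFactors H (H a ⊓ K b) ⊆ nontrivialFactors H (H a ⊓ K j) :=
    nontrivialFactors_mono (inf_le_inf_left _ (hK.monotone hbj))
  have h₂ : nontrivialFactors H (H a ⊓ K j) ⊆ nontrivialFactors H (H i ⊓ K j) :=
    nontrivialFactors_mono (inf_le_inf_right _ (hH.monotone hai))
  rw [inf_eq_of_nontrivialFactors_eq_right hH hK hbj (h₁.antisymm (h₂.trans h.ge)),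
    inf_eq_of_nontrivialFactors_eq_left hH.monotone hai _ (h₂.antisymm (h.ge.trans h₁))]

end NontrivialFactors

namespace CSL

variable {G : Type*} [Group G] {n : ℕ} {H K : Fin (n + 1) → Subgroup G}

theorem inf_mem (hH : Monotone H) (hK : Monotone K) {A B : Subgroup G} (hA : A ∈ CSL H K)
    (hB : B ∈ CSL H K) : A ⊓ B ∈ CSL H K := by
  obtain ⟨a, b, rfl⟩ := hA
  obtain ⟨i, j, rfl⟩ := hB
  exact ⟨min a i, min b j, by rw [inf_inf_inf_comm, hH.map_min_eq_inf, hK.map_min_eq_inf]⟩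

theorem exists_eq_inf_of_le (hH : Monotone H) (hK : Monotone K) {A : Subgroup G}
    {i j : Fin (n + 1)} (hA : A ∈ CSL H K) (hAij : A ≤ H i ⊓ K j) :
    ∃ a ≤ i, ∃ b ≤ j, A = H a ⊓ K b := by
  obtain ⟨a, b, rfl⟩ := hA
  refine ⟨min a i, min_le_right _ _, min b j, min_le_right _ _, ?_⟩
  rw [hH.map_min_eq_inf, hK.map_min_eq_inf, inf_inf_inf_comm, inf_eq_left.2 hAij]

theorem nontrivialFactors_inf (hH : Monotone H) (hK : Monotone K) {A B : Subgroup G}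
    (hA : A ∈ CSL H K) (hB : B ∈ CSL H K) :
    nontrivialFactors H (A ⊓ B) = nontrivialFactors H A ∩ nontrivialFactors H B := by
  obtain ⟨a, b, rfl⟩ := hA
  obtain ⟨i, j, rfl⟩ := hB
  refine (Set.subset_inter (nontrivialFactors_mono inf_le_left)
    (nontrivialFactors_mono inf_le_right)).antisymm ?_
  rintro p ⟨hpA, hpB⟩
  rw [mem_nontrivialFactors_inf hH] at hpA hpB
  rw [inf_inf_inf_comm, ← hH.map_min_eq_inf, ← hK.map_min_eq_inf, mem_nontrivialFactors_inf hH,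
    le_min_iff]
  refine ⟨⟨hpA.1, hpB.1⟩, ?_⟩
  rcases min_choice b j with h | h <;> rw [h]
  exacts [hpA.2, hpB.2]

theorem strictMonoOn_nontrivialFactors (hH : IsCompositionSeries H)
    (hK : IsCompositionSeries K) : StrictMonoOn (nontrivialFactors H) (CSL H K) := by
  rintro A hA _ ⟨i, j, rfl⟩ hlt
  obtain ⟨a, hai, b, hbj, rfl⟩ := exists_eq_inf_of_le hH.monotone hK.monotone hA hlt.le
  exact (nontrivialFactors_mono hlt.le).ssubset_of_ne fun h =>
    hlt.ne (inf_eq_of_nontrivialFactors_eq hH hK hai hbj h)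

/-- Every grid point between the two ends of a cover is one of them, so a cover is a single step
of the grid, which adds at most one nontrivial factor. -/
theorem subsingleton_nontrivialFactors_sdiff_of_covBy (hH : IsCompositionSeries H)
    (hK : IsCompositionSeries K) {A B : CSL H K} (hAB : A ⋖ B) :
    (nontrivialFactors H B \ nontrivialFactors H A).Subsingleton := by
  obtain ⟨i, j, hB⟩ := B.2
  obtain ⟨a, hai, b, hbj, hA⟩ :=
    exists_eq_inf_of_le hH.monotone hK.monotone A.2
      ((show (A : Subgroup G) ≤ B from hAB.le).trans_eq hB)
  have between : ∀ s t, a ≤ s → s ≤ i → b ≤ t → t ≤ j → H s ⊓ K t = A ∨ H s ⊓ K t = B :=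
    fun s t has hsi hbt htj => (hAB.eq_or_eq (c := ⟨H s ⊓ K t, s, t, rfl⟩)
      (show (A : Subgroup G) ≤ _ from hA ▸ inf_le_inf (hH.monotone has) (hK.monotone hbt))
      (show _ ≤ (B : Subgroup G) from hB ▸ inf_le_inf (hH.monotone hsi) (hK.monotone htj))).imp
      (congrArg Subtype.val) (congrArg Subtype.val)
  have hne : (B : Subgroup G) ≠ A := fun h => hAB.ne (Subtype.ext h.symm)
  rcases between a j le_rfl hai hbj le_rfl with haj | haj
  · obtain ⟨p, hap, hpi, hp, hp'⟩ := Fin.exists_castSucc_succ_of_le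
      (P := fun s => H s ⊓ K j = A) hai haj fun h => hne (hB.trans h)
    rw [← (between _ _ (hap.trans p.castSucc_le_succ) hpi hbj le_rfl).resolve_left hp', ← hp]
    exact Set.subsingleton_singleton.anti (nontrivialFactors_succ_inf_sdiff_subset hH.monotone p _)
  · obtain ⟨q, hbq, hqj, hq, hq'⟩ := Fin.exists_castSucc_succ_of_le
      (P := fun t => H a ⊓ K t = A) hbj hA.symm fun h => hne (haj.symm.trans h)
    rw [← (between _ _ le_rfl hai (hbq.trans q.castSucc_le_succ) hqj).resolve_left hq', ← hq]
    exact Set.Subsingleton.anti (fun p hp p' hp' => hp.left_unique hH hK hp')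
      (nontrivialFactors_inf_succ_sdiff_subset hH hK a q)

instance : Finite (CSL H K) :=
  ((Set.finite_range fun ij : Fin (n + 1) × Fin (n + 1) => H ij.1 ⊓ K ij.2).subset
    (by rintro _ ⟨i, j, rfl⟩; exact ⟨(i, j), rfl⟩)).to_subtype

variable [Fact (Monotone H)] [Fact (Monotone K)]

instance : SemilatticeInf (CSL H K) :=
  Subtype.semilatticeInf fun _ _ => inf_mem Fact.out Fact.out

instance : OrderTop (CSL H K) where
  top := ⟨H (Fin.last n) ⊓ K (Fin.last n), _, _, rfl⟩
  le_top := by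
    rintro ⟨_, i, j, rfl⟩
    exact inf_le_inf (Fact.out (p := Monotone H) (Fin.le_last i))
      (Fact.out (p := Monotone K) (Fin.le_last j))

open Classical in
noncomputable instance : Lattice (CSL H K) :=
  letI := Fintype.ofFinite (CSL H K)
  { (inferInstance : SemilatticeInf (CSL H K)) with
    sup := fun A B => (Finset.univ.filter fun C => A ≤ C ∧ B ≤ C).inf id
    le_sup_left := fun _ _ => Finset.le_inf fun _ hC => (Finset.mem_filter.1 hC).2.1
    le_sup_right := fun _ _ => Finset.le_inf fun _ hC => (Finset.mem_filter.1 hC).2.2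
    sup_le := fun _ _ _ hAC hBC =>
      Finset.inf_le (Finset.mem_filter.2 ⟨Finset.mem_univ _, hAC, hBC⟩) }

theorem isLowerModularLattice (hH : IsCompositionSeries H) (hK : IsCompositionSeries K) :
    IsLowerModularLattice (CSL H K) := by
  refine ⟨fun {A B} hAC => ⟨inf_le_right.lt_of_ne fun h => hAC.ne ?_, fun E hE hEB => ?_⟩⟩
  · exact (sup_eq_left.2 (h ▸ inf_le_left)).symm
  have mono := strictMonoOn_nontrivialFactors hH hK
  obtain ⟨x, hxE, hx⟩ := Set.exists_of_ssubset (mono (A ⊓ B).2 E.2 hE)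
  obtain ⟨y, hyB, hyE⟩ := Set.exists_of_ssubset (mono E.2 B.2 hEB)
  have hsub : nontrivialFactors H B \ nontrivialFactors H (A ⊓ B : CSL H K) ⊆
      nontrivialFactors H (A ⊔ B : CSL H K) \ nontrivialFactors H A := by
    rintro z ⟨hzB, hz⟩
    refine ⟨nontrivialFactors_mono (le_sup_right : B ≤ A ⊔ B) hzB, fun hzA => hz ?_⟩
    exact (nontrivialFactors_inf hH.monotone hK.monotone A.2 B.2).ge ⟨hzA, hzB⟩
  have hxy := subsingleton_nontrivialFactors_sdiff_of_covBy hH hK hAC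
    (hsub ⟨nontrivialFactors_mono hEB.le hxE, hx⟩)
    (hsub ⟨hyB, fun hy => hyE (nontrivialFactors_mono hE.le hy)⟩)
  exact hyE (hxy ▸ hxE)

theorem slim_orderDual (hH : H (Fin.last n) = ⊤) (hK : K (Fin.last n) = ⊤) :
    Slim (CSL H K)ᵒᵈ := by
  let row (i : Fin (n + 1)) : CSL H K := ⟨H i, i, Fin.last n, by rw [hK, inf_top_eq]⟩
  let col (j : Fin (n + 1)) : CSL H K := ⟨K j, Fin.last n, j, by rw [hH, top_inf_eq]⟩
  have hrow : Monotone row := fun _ _ h => Fact.out (p := Monotone H) h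
  have hcol : Monotone col := fun _ _ h => Fact.out (p := Monotone K) h
  refine slim_of_joinIrred_subset_union hrow.dual_right.isChain_range
    hcol.dual_right.isChain_range fun x hx => ?_
  obtain ⟨i, j, hij⟩ := (OrderDual.ofDual x).2
  have hx' : x = OrderDual.toDual (row i) ⊔ OrderDual.toDual (col j) :=
    congrArg OrderDual.toDual (Subtype.ext hij : OrderDual.ofDual x = row i ⊓ col j)
  exact (hx.2 _ _ hx').imp (fun h => ⟨i, h.symm⟩) fun h => ⟨j, h.symm⟩

end CSL

/-- for any two composition series `H`, `K` of a group `G` (of the same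
length `n`, by Jordan–Hölder), the set `CSL H K` ordered by reverse inclusion is a
slim semimodular (finite) lattice; that is, it is order-isomorphic to one. -/
theorem dual_csl_slim_semimodular
    {G : Type*} [Group G] {n : ℕ} (H K : Fin (n + 1) → Subgroup G)
    (hH : IsCompositionSeries H) (hK : IsCompositionSeries K) :
    ∃ (L : Type) (_ : Lattice L) (_ : Fintype L) (_ : BoundedOrder L),
      Slim L ∧ Semimodular L ∧ Nonempty ((↥(CSL H K))ᵒᵈ ≃o L) := by
  have := Fact.mk hH.monotone
  have := Fact.mk hK.monotone
  have := CSL.isLowerModularLattice hH hK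
  obtain ⟨L, instL, instF, instB, ⟨e⟩⟩ := exists_orderIso_of_finite (CSL H K)ᵒᵈ
  refine ⟨L, instL, instF, instB, (CSL.slim_orderDual hH.2.1 hK.2.1).of_orderIso e, ?_, ⟨e⟩⟩
  exact Semimodular.of_orderIso (fun _ _ => IsUpperModularLattice.covBy_sup_of_inf_covBy) e
end

section
/- For every σ ∈ S_n, a subset of {1,…,n} is a section of σ if and only if it is a nonempty interval that is a union of segments of σ. -/
/-- `I` is closed with respect to `σ`: `σ i ∈ I` for all `i ∈ I`. -/
def PermClosed {n : ℕ} (σ : Equiv.Perm (Fin n)) (I : Set (Fin n)) : Prop :=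
  ∀ i ∈ I, σ i ∈ I

/-- `I` is a section of `σ`: a nonempty interval `{u,…,v}` such that `I`, `{x | x < u}`
and `{x | v < x}` are all closed with respect to `σ`. -/
def IsSection {n : ℕ} (σ : Equiv.Perm (Fin n)) (I : Set (Fin n)) : Prop :=
  ∃ u v : Fin n, u ≤ v ∧ I = Set.Icc u v ∧
    PermClosed σ I ∧ PermClosed σ {x | x < u} ∧ PermClosed σ {x | v < x}

/-- `I` is a segment of `σ`: a section minimal with respect to inclusion. -/
def IsSegment {n : ℕ} (σ : Equiv.Perm (Fin n)) (I : Set (Fin n)) : Prop :=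
  IsSection σ I ∧ ∀ J : Set (Fin n), IsSection σ J → J ⊆ I → J = I

/-- `Seg σ`, the set of all segments of `σ`. -/
def Seg {n : ℕ} (σ : Equiv.Perm (Fin n)) : Set (Set (Fin n)) :=
  {I | IsSegment σ I}

/-- `σ` and `μ` are sectionally inverted or equal: they have the same segments and on
each segment `μ` coincides with `σ` or with `σ⁻¹`. -/
def Rho {n : ℕ} (σ μ : Equiv.Perm (Fin n)) : Prop :=
  Seg σ = Seg μ ∧ ∀ I ∈ Seg σ, (∀ i ∈ I, μ i = σ i) ∨ (∀ i ∈ I, μ i = σ⁻¹ i)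

/-! A set closed under a permutation of a finite type has a closed complement, so a section
`{u,…,v}` is just an interval whose two cuts `{x | x < u}` and `{x | x ≤ v}` are closed, and a
segment is one with no closed cut strictly inside. A point `x` of a section therefore lies in the
segment bounded by the nearest closed cuts on either side of `x`, which stays inside the section.
Conversely, if an interval is a union of segments, the segments through its two endpoints show that
its two end cuts are closed. -/

section Cuts

variable {n : ℕ} {σ : Equiv.Perm (Fin n)}

theorem PermClosed.compl {S : Set (Fin n)} (h : PermClosed σ S) : PermClosed σ Sᶜ :=
  (((Set.toFinite S).injOn_iff_bijOn_of_mapsTo h).mp σ.injective.injOn).surjOn.mapsTo_compl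
    σ.injective

/-- The cut before position `k`; indexing by `ℕ` lets `k` range over all gaps `0, …, n`. -/
def IsCut (σ : Equiv.Perm (Fin n)) (k : ℕ) : Prop :=
  PermClosed σ {x | (x : ℕ) < k}

theorem permClosed_gt_iff_isCut (v : Fin n) :
    PermClosed σ {x | v < x} ↔ IsCut σ (v + 1) := by
  have hcompl : {x : Fin n | v < x}ᶜ = {x : Fin n | (x : ℕ) < v + 1} := by
    ext x
    simp only [Set.mem_compl_iff, Set.mem_ofPred_eq, not_lt, Fin.le_def]
    lia
  constructor
  · intro h
    rw [IsCut, ← hcompl]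
    exact h.compl
  · intro h
    rw [← compl_compl {x : Fin n | v < x}, hcompl]
    exact h.compl

theorem IsCut.permClosed_Icc {u v : Fin n} (hu : IsCut σ u) (hv : IsCut σ (v + 1)) :
    PermClosed σ (Set.Icc u v) := fun i hi =>
  ⟨not_lt.mp (hu.compl i (not_lt.mpr hi.1)), Nat.lt_succ_iff.mp (hv i (Nat.lt_succ_iff.mpr hi.2))⟩

theorem isSection_iff_isCut {I : Set (Fin n)} :
    IsSection σ I ↔ ∃ u v : Fin n, u ≤ v ∧ I = Set.Icc u v ∧ IsCut σ u ∧ IsCut σ (v + 1) := by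
  constructor
  · rintro ⟨u, v, huv, hI, -, hu, hv⟩
    exact ⟨u, v, huv, hI, hu, (permClosed_gt_iff_isCut v).mp hv⟩
  · rintro ⟨u, v, huv, rfl, hu, hv⟩
    exact ⟨u, v, huv, rfl, hu.permClosed_Icc hv, hu, (permClosed_gt_iff_isCut v).mpr hv⟩

theorem isSegment_Icc_of_not_isCut {a b : Fin n} (hab : a ≤ b) (ha : IsCut σ a)
    (hb : IsCut σ (b + 1)) (hno : ∀ k, (a : ℕ) < k → k ≤ b → ¬ IsCut σ k) :
    IsSegment σ (Set.Icc a b) := by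
  refine ⟨isSection_iff_isCut.mpr ⟨a, b, hab, rfl, ha, hb⟩, fun J hJ hJab => ?_⟩
  obtain ⟨a', b', hab', rfl, ha', hb'⟩ := isSection_iff_isCut.mp hJ
  have ha'_mem : a' ∈ Set.Icc a b := hJab ⟨le_rfl, hab'⟩
  have hb'_mem : b' ∈ Set.Icc a b := hJab ⟨hab', le_rfl⟩
  simp only [Set.mem_Icc, Fin.le_def] at ha'_mem hb'_mem
  have ha'a : a' = a := Fin.ext <| by
    by_contra hne
    exact hno a' (by lia) (by lia) ha'
  have hb'b : b' = b := Fin.ext <| by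
    by_contra hne
    exact hno (b' + 1) (by lia) (by lia) hb'
  rw [ha'a, hb'b]

theorem exists_isSegment_mem_subset {I : Set (Fin n)} {x : Fin n} (hI : IsSection σ I)
    (hx : x ∈ I) : ∃ J, IsSegment σ J ∧ x ∈ J ∧ J ⊆ I := by
  classical
  obtain ⟨u, v, -, rfl, hu, hv⟩ := isSection_iff_isCut.mp hI
  have hcut_above : ∃ k, (x : ℕ) < k ∧ IsCut σ k :=
    ⟨v + 1, Nat.lt_succ_iff.mpr hx.2, hv⟩
  set a := Nat.findGreatest (IsCut σ) x
  set b := Nat.find hcut_above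
  have hua : (u : ℕ) ≤ a := Nat.le_findGreatest (Fin.le_def.mp hx.1) hu
  have hax : a ≤ x := Nat.findGreatest_le _
  have hxb : (x : ℕ) < b := (Nat.find_spec hcut_above).1
  have hbv : b ≤ v + 1 := Nat.find_min' hcut_above ⟨Nat.lt_succ_iff.mpr hx.2, hv⟩
  have hb_succ : b - 1 + 1 = b := Nat.sub_add_cancel (by lia)
  let a' : Fin n := ⟨a, by lia⟩
  let b' : Fin n := ⟨b - 1, by lia⟩
  have hno : ∀ k, (a' : ℕ) < k → k ≤ b' → ¬ IsCut σ k := fun k hak hkb hk => by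
    rcases le_or_gt k x with hkx | hxk
    · exact Nat.findGreatest_is_greatest hak hkx hk
    · exact Nat.find_min hcut_above (show k < b by simp only [b'] at hkb; lia) ⟨hxk, hk⟩
  refine ⟨Set.Icc a' b', ?_, ⟨Fin.le_def.mpr hax, Fin.le_def.mpr (by simp only [b']; lia)⟩,
    Set.Icc_subset_Icc (Fin.le_def.mpr hua) (Fin.le_def.mpr (by simp only [b']; lia))⟩
  refine isSegment_Icc_of_not_isCut (Fin.le_def.mpr (by simp only [a', b']; lia))
    (Nat.findGreatest_spec (Fin.le_def.mp hx.1) hu) ?_ hno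
  simpa only [b', hb_succ] using (Nat.find_spec hcut_above).2

theorem IsSection.isCut_of_min_mem {S : Set (Fin n)} {u : Fin n} (hS : IsSection σ S)
    (hSu : S ⊆ Set.Ici u) (hu : u ∈ S) : IsCut σ u := by
  obtain ⟨a, b, hab, rfl, ha, -⟩ := isSection_iff_isCut.mp hS
  rwa [← le_antisymm hu.1 (hSu ⟨le_rfl, hab⟩)]

theorem IsSection.isCut_of_max_mem {S : Set (Fin n)} {v : Fin n} (hS : IsSection σ S)
    (hSv : S ⊆ Set.Iic v) (hv : v ∈ S) : IsCut σ (v + 1) := by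
  obtain ⟨a, b, hab, rfl, -, hb⟩ := isSection_iff_isCut.mp hS
  rwa [le_antisymm hv.2 (hSv ⟨hab, le_rfl⟩)]

end Cuts

/-- a subset of `{1,…,n}` is a section of `σ` iff it is a nonempty
interval that is a union of segments of `σ`. -/
theorem isSection_iff_interval_union_segments {n : ℕ} (σ : Equiv.Perm (Fin n))
    (I : Set (Fin n)) :
    IsSection σ I ↔
      (∃ u v : Fin n, u ≤ v ∧ I = Set.Icc u v) ∧
      ∃ T : Set (Set (Fin n)), T ⊆ Seg σ ∧ I = ⋃₀ T := by
  constructor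
  · intro hI
    refine ⟨?_, {J | IsSegment σ J ∧ J ⊆ I}, fun J hJ => hJ.1, ?_⟩
    · obtain ⟨u, v, huv, hIuv, -⟩ := hI
      exact ⟨u, v, huv, hIuv⟩
    · refine subset_antisymm (fun x hx => ?_) (Set.sUnion_subset fun J hJ => hJ.2)
      obtain ⟨J, hJ, hxJ, hJI⟩ := exists_isSegment_mem_subset hI hx
      exact ⟨J, ⟨hJ, hJI⟩, hxJ⟩
  · rintro ⟨⟨u, v, huv, rfl⟩, T, hT, hIT⟩
    have hsub : ∀ S ∈ T, S ⊆ Set.Icc u v := fun S hS => hIT ▸ Set.subset_sUnion_of_mem hS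
    obtain ⟨S, hST, huS⟩ : u ∈ ⋃₀ T := hIT ▸ ⟨le_rfl, huv⟩
    obtain ⟨S', hS'T, hvS'⟩ : v ∈ ⋃₀ T := hIT ▸ ⟨huv, le_rfl⟩
    refine isSection_iff_isCut.mpr ⟨u, v, huv, rfl, ?_, ?_⟩
    · exact (hT hST).1.isCut_of_min_mem ((hsub S hST).trans Set.Icc_subset_Ici_self) huS
    · exact (hT hS'T).1.isCut_of_max_mem ((hsub S' hS'T).trans Set.Icc_subset_Iic_self) hvS'
end

section
/- For every finite slim semimodular lattice K, the number of meet-irreducible elements of K (elements u ≠ ⊤ such that u = a ⊓ b implies u = a or u = b) equals the length of K. -/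
/-- `u` is meet-irreducible: `u ≠ ⊤` and `u = a ⊓ b` implies `u = a` or `u = b`. -/
def MeetIrred {L : Type*} [Lattice L] [OrderTop L] (u : L) : Prop :=
  u ≠ ⊤ ∧ ∀ a b : L, u = a ⊓ b → u = a ∨ u = b

/-- `L` has length `n`: there is a chain `x₀ < ⋯ < x_n` and no longer chain. -/
def HasLength (L : Type*) [Preorder L] (n : ℕ) : Prop :=
  (∃ x : Fin (n + 1) → L, StrictMono x) ∧
    ∀ (m : ℕ) (x : Fin (m + 1) → L), StrictMono x → m ≤ n

section Irreducible

variable {L : Type*} [Lattice L]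

theorem joinIrred_iff_supIrred [OrderBot L] {p : L} : JoinIrred p ↔ SupIrred p := by
  simp only [JoinIrred, SupIrred, isMin_iff_eq_bot, eq_comm (a := p), ne_eq]

theorem meetIrred_iff_infIrred [OrderTop L] {u : L} : MeetIrred u ↔ InfIrred u := by
  simp only [MeetIrred, InfIrred, isMax_iff_eq_top, eq_comm (a := u), ne_eq]

theorem semimodular_iff : Semimodular L ↔ IsUpperModularLattice L :=
  ⟨fun h ↦ ⟨h _ _⟩, fun _ _ _ ↦ covBy_sup_of_inf_covBy_left⟩

theorem IsAtom.supIrred [OrderBot L] {a : L} (ha : IsAtom a) : SupIrred a := by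
  refine ⟨fun h ↦ ha.ne_bot h.eq_bot, fun b c hbc ↦ ?_⟩
  rcases ha.le_iff.1 (hbc ▸ le_sup_left : b ≤ a) with rfl | hb
  · exact .inr (by simpa using hbc)
  · exact .inl hb

theorem exists_supIrred_le_not_le [OrderBot L] [WellFoundedLT L] {x y : L} (h : ¬ x ≤ y) :
    ∃ j, SupIrred j ∧ j ≤ x ∧ ¬ j ≤ y := by
  obtain ⟨s, rfl, hs⟩ := exists_supIrred_decomposition x
  by_contra! H
  exact h (Finset.sup_le fun j hj ↦ H j (hs hj) (Finset.le_sup (f := id) hj))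

theorem exists_infIrred_le_not_le [OrderTop L] [WellFoundedGT L] {x y : L} (h : ¬ x ≤ y) :
    ∃ u, InfIrred u ∧ y ≤ u ∧ ¬ x ≤ u := by
  obtain ⟨s, rfl, hs⟩ := exists_infIrred_decomposition y
  by_contra! H
  exact h (Finset.le_inf fun u hu ↦ H u (hs hu) (Finset.inf_le hu))

end Irreducible

namespace Set.Ici

variable {α : Type*} {a : α}

theorem coe_covBy_coe_iff [Preorder α] {x y : Ici a} : (x : α) ⋖ y ↔ x ⋖ y :=
  Set.OrdConnected.apply_covBy_apply_iff (OrderEmbedding.subtype (· ∈ Ici a))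
    (by rw [OrderEmbedding.coe_subtype, Subtype.range_coe]; infer_instance)

theorem infIrred_iff [SemilatticeInf α] {x : Ici a} : InfIrred x ↔ InfIrred (x : α) := by
  refine and_congr (not_congr ⟨fun h b hxb ↦ ?_, fun h b hxb ↦ h hxb⟩)
    ⟨fun h b c hbc ↦ ?_, fun h b c hbc ↦ ?_⟩
  · exact h (b := ⟨b, x.2.trans hxb⟩) hxb
  · have hb : a ≤ b := x.2.trans (hbc ▸ inf_le_left)
    have hc : a ≤ c := x.2.trans (hbc ▸ inf_le_right)
    simpa [Subtype.ext_iff] using h (b := ⟨b, hb⟩) (c := ⟨c, hc⟩) (Subtype.ext hbc)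
  · simpa [Subtype.ext_iff] using h (b := b) (c := c) (congrArg Subtype.val hbc)

instance [Lattice α] [IsUpperModularLattice α] : IsUpperModularLattice (Ici a) :=
  ⟨fun h ↦ coe_covBy_coe_iff.1 (covBy_sup_of_inf_covBy_left (coe_covBy_coe_iff.2 h))⟩

end Set.Ici

section Slim

variable {K : Type*} [Lattice K] [OrderBot K]

theorem Slim.of_monotone {M : Type*} [Lattice M] [OrderBot M] (hK : Slim K) {f : K → M}
    (hf : Monotone f) (hsurj : ∀ q, JoinIrred q → ∃ p, JoinIrred p ∧ f p = q) : Slim M := by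
  rintro ⟨p, q, r, hp, hq, hr, hpq, hqp, hpr, hrp, hqr, hrq⟩
  obtain ⟨p', hp', rfl⟩ := hsurj p hp
  obtain ⟨q', hq', rfl⟩ := hsurj q hq
  obtain ⟨r', hr', rfl⟩ := hsurj r hr
  exact hK ⟨p', q', r', hp', hq', hr', mt (@hf _ _) hpq, mt (@hf _ _) hqp, mt (@hf _ _) hpr,
    mt (@hf _ _) hrp, mt (@hf _ _) hqr, mt (@hf _ _) hrq⟩

theorem Set.Ici.exists_supIrred_sup_eq [WellFoundedLT K] {a : K} {x : Set.Ici a}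
    (hx : SupIrred x) : ∃ j, SupIrred j ∧ (⟨j ⊔ a, le_sup_right⟩ : Set.Ici a) = x := by
  obtain ⟨s, hs, hirr⟩ := exists_supIrred_decomposition (x : K)
  let g : K → Set.Ici a := fun j ↦ ⟨j ⊔ a, le_sup_right⟩
  have hgx : s.sup g = x :=
    calc s.sup g = g (s.sup id) := (Finset.apply_sup_eq_sup_comp g
          (fun b c ↦ Subtype.ext (sup_sup_distrib_right b c a)) (Subtype.ext (bot_sup_eq a))).symm
      _ = x := Subtype.ext (by simp only [g, hs, sup_eq_left.2 x.2])
  obtain ⟨j, hj, hjx⟩ := hx.finset_sup_eq hgx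
  exact ⟨j, hirr hj, hjx⟩

theorem Slim.Ici [WellFoundedLT K] (hS : Slim K) (a : K) : Slim (Set.Ici a) :=
  hS.of_monotone (f := fun j ↦ (⟨j ⊔ a, le_sup_right⟩ : Set.Ici a))
    (fun _ _ h ↦ sup_le_sup_right h a) fun x hx ↦ by
      obtain ⟨j, hj, rfl⟩ := Set.Ici.exists_supIrred_sup_eq (joinIrred_iff_supIrred.1 hx)
      exact ⟨j, joinIrred_iff_supIrred.2 hj, rfl⟩

end Slim

section Atom

variable {K : Type*} [Lattice K] [OrderBot K] {a u w : K}

theorem IsAtom.le_of_lt_of_infIrred [IsUpperModularLattice K] (ha : IsAtom a) (hu : InfIrred u)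
    (hau : ¬ a ≤ u) (huw : u < w) : a ≤ w := by
  have hcov : u ⋖ a ⊔ u := covBy_sup_of_inf_covBy_left <| by
    rw [disjoint_iff.1 (ha.not_le_iff_disjoint.1 hau)]
    exact bot_covBy_iff.2 ha
  rcases hcov.eq_or_eq (le_inf huw.le hcov.le) inf_le_right with h | h
  · rcases hu.2 h with h | h
    · exact absurd h huw.ne'
    · exact absurd (h ▸ le_sup_left) hau
  · exact le_sup_left.trans (h ▸ inf_le_left)

theorem existsUnique_infIrred_not_le [OrderTop K] [Finite K] [IsUpperModularLattice K]
    (hS : Slim K) (ha : IsAtom a) : ∃! u : K, InfIrred u ∧ ¬ a ≤ u := by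
  obtain ⟨u, hu, -, hau⟩ := exists_infIrred_le_not_le (fun h : a ≤ ⊥ ↦ ha.ne_bot (le_bot_iff.1 h))
  refine ⟨u, ⟨hu, hau⟩, fun v ⟨hv, hav⟩ ↦ ?_⟩
  by_contra hvu
  have not_le {x y : K} (hx : InfIrred x) (hax : ¬ a ≤ x) (hay : ¬ a ≤ y) (hxy : x ≠ y) :
      ¬ x ≤ y := fun h ↦ hay (ha.le_of_lt_of_infIrred hx hax (h.lt_of_ne hxy))
  have incomp {x j : K} (hax : ¬ a ≤ x) (hj : SupIrred j) (hjx : j ≤ x) :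
      ¬ a ≤ j ∧ ¬ j ≤ a := ⟨fun h ↦ hax (h.trans hjx), fun h ↦ by
    rcases ha.le_iff.1 h with rfl | rfl
    exacts [hj.ne_bot rfl, hax hjx]⟩
  obtain ⟨j, hj, hjv, hju⟩ := exists_supIrred_le_not_le (not_le hv hav hau hvu)
  obtain ⟨k, hk, hku, hkv⟩ := exists_supIrred_le_not_le (not_le hu hau hav (Ne.symm hvu))
  exact hS ⟨a, j, k, joinIrred_iff_supIrred.2 ha.supIrred, joinIrred_iff_supIrred.2 hj,
    joinIrred_iff_supIrred.2 hk, (incomp hav hj hjv).1, (incomp hav hj hjv).2,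
    (incomp hau hk hku).1, (incomp hau hk hku).2,
    fun h ↦ hju (h.trans hku), fun h ↦ hkv (h.trans hjv)⟩

end Atom

section Length

variable {K : Type*} [PartialOrder K] {n : ℕ}

theorem HasLength.subsingleton [BoundedOrder K] (h : HasLength K 0) : Subsingleton K := by
  refine subsingleton_of_bot_eq_top (by_contra fun hne ↦ ?_)
  have := h.2 1 ![⊥, ⊤] (by simpa using bot_lt_iff_ne_bot.2 (Ne.symm hne))
  omega

theorem HasLength.exists_isAtom_Ici [OrderBot K] [Finite K] (h : HasLength K (n + 1)) :
    ∃ a : K, IsAtom a ∧ HasLength (Set.Ici a) n := by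
  obtain ⟨⟨x, hx⟩, hmax⟩ := h
  obtain ⟨a, ha, hax⟩ := (eq_bot_or_exists_atom_le (x (Fin.succ 0))).resolve_left
    (bot_le.trans_lt (hx (Fin.succ_pos 0))).ne'
  refine ⟨a, ha, ⟨fun i ↦ ⟨x i.succ, hax.trans (hx.monotone (Fin.succ_le_succ_iff.2 i.zero_le))⟩,
    fun i j hij ↦ hx (Fin.succ_lt_succ_iff.2 hij)⟩, fun m y hy ↦ ?_⟩
  have := hmax (m + 1) (Fin.cons ⊥ fun i ↦ (y i : K))
    (Fin.strictMono_cons.2 ⟨fun i ↦ ha.bot_lt.trans_le (y i).2, fun i j hij ↦ hy hij⟩)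
  omega

end Length

theorem Nat.card_infIrred_eq_card_infIrred_Ici_add_one {K : Type*} [Lattice K] [Finite K]
    {a : K} (h : ∃! u : K, InfIrred u ∧ ¬ a ≤ u) :
    Nat.card {u : K // InfIrred u} = Nat.card {x : Set.Ici a // InfIrred x} + 1 := by
  obtain ⟨u₀, hu₀, huniq⟩ := h
  have above : ({u | InfIrred u} ∩ Set.Ici a).ncard = Nat.card {x : Set.Ici a // InfIrred x} := by
    have : {u | InfIrred u} ∩ Set.Ici a = Subtype.val '' {x : Set.Ici a | InfIrred x} := by
      ext u
      simp [Set.Ici.infIrred_iff, and_comm]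
    rw [this, Set.ncard_image_of_injective _ Subtype.val_injective, ← Nat.card_coe_set_eq]
    rfl
  have below : ({u | InfIrred u} \ Set.Ici a).ncard = 1 :=
    Set.ncard_eq_one.2 ⟨u₀, Set.ext fun u ↦ ⟨fun hu ↦ huniq u hu, fun h ↦ h ▸ hu₀⟩⟩
  rw [← above, ← below, Set.ncard_inter_add_ncard_sdiff_eq_ncard _ _ (Set.toFinite _)]
  exact Nat.card_coe_set_eq _

theorem card_infIrred_eq_of_hasLength {K : Type*} [Lattice K] [BoundedOrder K] [Finite K]
    [IsUpperModularLattice K] (hS : Slim K) {n : ℕ} (hlen : HasLength K n) :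
    Nat.card {u : K // InfIrred u} = n := by
  induction n generalizing K with
  | zero =>
    have := hlen.subsingleton
    have : IsEmpty {u : K // InfIrred u} := ⟨fun u ↦ u.2.ne_top (Subsingleton.elim _ _)⟩
    exact Nat.card_of_isEmpty
  | succ n ih =>
    obtain ⟨a, ha, hlen'⟩ := hlen.exists_isAtom_Ici
    rw [Nat.card_infIrred_eq_card_infIrred_Ici_add_one (existsUnique_infIrred_not_le hS ha),
      ih (hS.Ici a) hlen']

/-- in a finite slim semimodular lattice, the number of meet-irreducible
elements equals the length of the lattice. -/
theorem card_meetIrred_eq_length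
    {K : Type*} [Lattice K] [Fintype K] [BoundedOrder K]
    (hS : Slim K) (hM : Semimodular K) (n : ℕ) (hlen : HasLength K n) :
    Nat.card {u : K // MeetIrred u} = n := by
  have := semimodular_iff.1 hM
  simp_rw [meetIrred_iff_infIrred]
  exact card_infIrred_eq_of_hasLength hS hlen
end

section
/- Let L be a slim semimodular lattice of length n ≥ 1, and let C = {⊥ = c₀ ⋖ c₁ ⋖ ⋯ ⋖ c_n = ⊤} and D = {⊥ = d₀ ⋖ d₁ ⋖ ⋯ ⋖ d_n = ⊤} be maximal chains of L such that every join-irreducible element of L belongs to C ∪ D. Then for all i, j ∈ {1,…,n} the following are equivalent: (1) there exists a meet-irreducible element u of L such that c_i is the smallest element of C ∖ ↓u and d_j is the smallest element of D ∖ ↓u; (2) c_{i−1} ⊔ d_{j−1} ≠ c_i ⊔ d_j and c_i ⊔ d_j = c_{i−1} ⊔ d_j = c_i ⊔ d_{j−1}. (That is, the permutations π₂ and π₃ associated with the pair (C, D) coincide.) -/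
/-- `x` is the smallest element of the chain (range of) `e` not lying below `u`. -/
def SmallestOutside {L : Type*} [Lattice L] {n : ℕ} (e : Fin (n + 1) → L) (u x : L) : Prop :=
  ¬ x ≤ u ∧ ∀ k : Fin (n + 1), ¬ e k ≤ u → x ≤ e k

/-
Every element of `L` is a join `c a ⊔ d b`, since the joins of this form contain `⊥` and all
join-irreducibles and are closed under `⊔`. If `u` is meet-irreducible and `c_i`, `d_j` are the
smallest elements of the chains outside `↓u`, then `u = c_{i-1} ⊔ d_{j-1}`, and by semimodularity
`u` is covered by both `u ⊔ c_i` and `u ⊔ d_j`; meet-irreducibility forces these covers to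
coincide, which is condition (2). Conversely, under (2) the elements above `c_{i-1} ⊔ d_{j-1}`
lie above `c_i` exactly when they lie above `d_j`, so any `u ≥ c_{i-1} ⊔ d_{j-1}` maximal with
`c_i ≰ u` is meet-irreducible, with `c_i` and `d_j` smallest outside `↓u`.
-/

section Irreducible

variable {L : Type*} [Lattice L]

theorem SupIrred.joinIrred [OrderBot L] {p : L} (hp : SupIrred p) : JoinIrred p :=
  ⟨hp.ne_bot, fun _ _ h => (hp.2 h.symm).imp Eq.symm Eq.symm⟩

theorem mem_of_supClosed_of_joinIrred_mem [OrderBot L] [WellFoundedLT L] {S : Set L}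
    (hS : SupClosed S) (hbot : ⊥ ∈ S) (hJ : ∀ p : L, JoinIrred p → p ∈ S) (x : L) : x ∈ S := by
  obtain ⟨s, rfl, hs⟩ := exists_supIrred_decomposition x
  exact Finset.sup_induction hbot (fun _ ha _ hb => hS ha hb) fun p hp => hJ p (hs hp).joinIrred

theorem MeetIrred.eq_of_covBy [OrderTop L] {u x y : L} (hu : MeetIrred u) (hx : u ⋖ x)
    (hy : u ⋖ y) : x = y := by
  by_contra hxy
  have hinf : u = x ⊓ y := by
    rcases hx.eq_or_eq (le_inf hx.le hy.le) inf_le_left with h | h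
    · exact h.symm
    · exact absurd ((hy.eq_or_eq hx.le (h ▸ inf_le_right)).resolve_left hx.lt.ne') hxy
  rcases hu.2 x y hinf with h | h
  · exact hx.lt.ne h
  · exact hy.lt.ne h

theorem meetIrred_of_forall_lt_imp_le [OrderTop L] {u w : L} (hwu : ¬ w ≤ u)
    (hw : ∀ x, u < x → w ≤ x) : MeetIrred u := by
  refine ⟨fun h => hwu (h ▸ le_top), fun a b hab => ?_⟩
  by_contra! h
  exact hwu (hab ▸ le_inf (hw a (lt_of_le_of_ne (hab ▸ inf_le_left) h.1))
    (hw b (lt_of_le_of_ne (hab ▸ inf_le_right) h.2)))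

theorem exists_meetIrred_le_not_le [OrderTop L] [WellFoundedGT L] {v w : L} (h : ¬ w ≤ v) :
    ∃ u, MeetIrred u ∧ v ≤ u ∧ ¬ w ≤ u := by
  obtain ⟨u, ⟨hvu, hwu⟩, hmax⟩ :=
    wellFounded_gt.has_min {x | v ≤ x ∧ ¬ w ≤ x} ⟨v, le_rfl, h⟩
  refine ⟨u, meetIrred_of_forall_lt_imp_le hwu fun x hx => ?_, hvu, hwu⟩
  by_contra hwx
  exact hmax x ⟨hvu.trans hx.le, hwx⟩ hx

end Irreducible

section Chains

variable {L : Type*} [Lattice L]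

theorem exists_sup_eq_of_joinIrred_mem_chains [OrderBot L] [WellFoundedLT L]
    {ι κ : Type*} [LinearOrder ι] [OrderBot ι] [LinearOrder κ] [OrderBot κ]
    {c : ι → L} {d : κ → L} (hc : Monotone c) (hd : Monotone d) (hc0 : c ⊥ = ⊥) (hd0 : d ⊥ = ⊥)
    (hJ : ∀ p : L, JoinIrred p → (∃ k, p = c k) ∨ (∃ k, p = d k)) (x : L) :
    ∃ a b, c a ⊔ d b = x := by
  refine mem_of_supClosed_of_joinIrred_mem (S := {x | ∃ a b, c a ⊔ d b = x}) ?_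
    ⟨⊥, ⊥, by rw [hc0, hd0, sup_idem]⟩ (fun p hp => ?_) x
  · rintro _ ⟨a, b, rfl⟩ _ ⟨a', b', rfl⟩
    exact ⟨a ⊔ a', b ⊔ b', by rw [hc.map_sup, hd.map_sup, sup_sup_sup_comm]⟩
  · rcases hJ p hp with ⟨k, rfl⟩ | ⟨k, rfl⟩
    · exact ⟨k, ⊥, by rw [hd0, sup_bot_eq]⟩
    · exact ⟨⊥, k, by rw [hc0, bot_sup_eq]⟩

variable {n : ℕ} {e : Fin (n + 1) → L} {u : L} {i : Fin n}

theorem Monotone.le_apply_castSucc_of_not_le (he : Monotone e) (hi : ¬ e i.succ ≤ u)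
    {k : Fin (n + 1)} (hk : e k ≤ u) : e k ≤ e i.castSucc :=
  he <| (k.succ_le_or_le_castSucc i).resolve_left fun h => hi ((he h).trans hk)

theorem smallestOutside_succ_iff (he : StrictMono e) :
    SmallestOutside e u (e i.succ) ↔ e i.castSucc ≤ u ∧ ¬ e i.succ ≤ u := by
  refine ⟨fun ⟨hi, hmin⟩ => ⟨?_, hi⟩, fun ⟨hci, hi⟩ => ⟨hi, fun k hk => ?_⟩⟩
  · by_contra h
    exact (he (Fin.castSucc_lt_succ (i := i))).not_ge (hmin _ h)
  · refine he.monotone <| (k.succ_le_or_le_castSucc i).resolve_right fun h => ?_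
    exact hk ((he.monotone h).trans hci)

end Chains

section Covers

variable {L : Type*} [Lattice L] {α β γ δ : L}

theorem Semimodular.isUpperModularLattice (hM : Semimodular L) : IsUpperModularLattice L :=
  ⟨hM _ _⟩

theorem CovBy.covBy_sup_of_le_of_not_le [IsUpperModularLattice L] {a b u : L} (hab : a ⋖ b)
    (hau : a ≤ u) (hbu : ¬ b ≤ u) : u ⋖ u ⊔ b := by
  have hinf : b ⊓ u = a := by
    rcases hab.eq_or_eq (le_inf hab.le hau) inf_le_left with h | h
    · exact h
    · exact absurd (h ▸ inf_le_right) hbu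
  rw [sup_comm]
  exact (hinf ▸ hab).sup_of_inf_left

theorem sup_eq_of_meetIrred_sup [OrderTop L] [IsUpperModularLattice L] (hαγ : α ⋖ γ)
    (hβδ : β ⋖ δ) (hu : MeetIrred (α ⊔ β)) (hγ : ¬ γ ≤ α ⊔ β) (hδ : ¬ δ ≤ α ⊔ β) :
    α ⊔ β ≠ γ ⊔ δ ∧ γ ⊔ δ = α ⊔ δ ∧ γ ⊔ δ = γ ⊔ β := by
  have hcov : α ⊔ β ⊔ γ = α ⊔ β ⊔ δ :=
    hu.eq_of_covBy (hαγ.covBy_sup_of_le_of_not_le le_sup_left hγ)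
      (hβδ.covBy_sup_of_le_of_not_le le_sup_right hδ)
  have hγβ : α ⊔ β ⊔ γ = γ ⊔ β := by rw [sup_right_comm, sup_eq_right.mpr hαγ.le]
  have hαδ : α ⊔ β ⊔ δ = α ⊔ δ := by rw [sup_assoc, sup_eq_right.mpr hβδ.le]
  have hγδ : γ ⊔ δ = α ⊔ β ⊔ γ := le_antisymm
    (sup_le le_sup_right (hcov ▸ le_sup_right)) (sup_le (sup_le_sup hαγ.le hβδ.le) le_sup_left)
  refine ⟨fun h => hδ (h ▸ le_sup_right), ?_, ?_⟩
  · rw [hγδ, hcov, hαδ]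
  · rw [hγδ, hγβ]

theorem exists_meetIrred_of_sup_eq [OrderTop L] [WellFoundedGT L] (hαγ : α ≤ γ) (hβδ : β ≤ δ)
    (h : α ⊔ β ≠ γ ⊔ δ ∧ γ ⊔ δ = α ⊔ δ ∧ γ ⊔ δ = γ ⊔ β) :
    ∃ u, MeetIrred u ∧ α ⊔ β ≤ u ∧ ¬ γ ≤ u ∧ ¬ δ ≤ u := by
  obtain ⟨hne, hαδ, hγβ⟩ := h
  have hγ : ¬ γ ≤ α ⊔ β := fun hγ => hne <| le_antisymm (sup_le_sup hαγ hβδ) <|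
    hγβ ▸ sup_le hγ le_sup_right
  obtain ⟨u, hu, hle, hγu⟩ := exists_meetIrred_le_not_le hγ
  refine ⟨u, hu, hle, hγu, fun hδu => hγu ?_⟩
  exact le_sup_left.trans (hαδ ▸ sup_le (le_sup_left.trans hle) hδu)

end Covers

theorem pi_two_eq_pi_three_general
    {L : Type*} [Lattice L] [Fintype L] [BoundedOrder L] {n : ℕ}
    (hM : Semimodular L)
    (c d : Fin (n + 1) → L)
    (hc0 : c 0 = ⊥) (hcc : ∀ i : Fin n, c i.castSucc ⋖ c i.succ)
    (hd0 : d 0 = ⊥) (hdc : ∀ i : Fin n, d i.castSucc ⋖ d i.succ)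
    (hJ : ∀ p : L, JoinIrred p → (∃ k, p = c k) ∨ (∃ k, p = d k)) :
    ∀ i j : Fin n,
      (∃ u : L, MeetIrred u ∧
        SmallestOutside c u (c i.succ) ∧ SmallestOutside d u (d j.succ)) ↔
      (c i.castSucc ⊔ d j.castSucc ≠ c i.succ ⊔ d j.succ ∧
       c i.succ ⊔ d j.succ = c i.castSucc ⊔ d j.succ ∧
       c i.succ ⊔ d j.succ = c i.succ ⊔ d j.castSucc) := by
  intro i j
  have hcm : StrictMono c := Fin.strictMono_iff_lt_succ.mpr fun i => (hcc i).lt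
  have hdm : StrictMono d := Fin.strictMono_iff_lt_succ.mpr fun i => (hdc i).lt
  have := hM.isUpperModularLattice
  simp only [smallestOutside_succ_iff hcm, smallestOutside_succ_iff hdm]
  constructor
  · rintro ⟨u, hu, ⟨hαu, hγu⟩, hβu, hδu⟩
    obtain ⟨a, b, rfl⟩ :=
      exists_sup_eq_of_joinIrred_mem_chains hcm.monotone hdm.monotone hc0 hd0 hJ u
    have hu_eq : c a ⊔ d b = c i.castSucc ⊔ d j.castSucc := le_antisymm
      (sup_le_sup (hcm.monotone.le_apply_castSucc_of_not_le hγu le_sup_left)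
        (hdm.monotone.le_apply_castSucc_of_not_le hδu le_sup_right))
      (sup_le hαu hβu)
    rw [hu_eq] at hu hγu hδu
    exact sup_eq_of_meetIrred_sup (hcc i) (hdc j) hu hγu hδu
  · intro h
    obtain ⟨u, hu, hle, hγu, hδu⟩ := exists_meetIrred_of_sup_eq (hcc i).le (hdc j).le h
    exact ⟨u, hu, ⟨le_sup_left.trans hle, hγu⟩, le_sup_right.trans hle, hδu⟩

/-- in the setting of two maximal chains of a slim semimodular lattice of
length `n ≥ 1` containing all join-irreducibles, the defining conditions of `π₂` and
`π₃` are equivalent; that is, the two permutations coincide. -/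
theorem pi_two_eq_pi_three
    {L : Type*} [Lattice L] [Fintype L] [BoundedOrder L] {n : ℕ} (hn : 1 ≤ n)
    (hS : Slim L) (hM : Semimodular L) (hlen : HasLength L n)
    (c d : Fin (n + 1) → L)
    (hc0 : c 0 = ⊥) (hcn : c (Fin.last n) = ⊤) (hcc : ∀ i : Fin n, c i.castSucc ⋖ c i.succ)
    (hd0 : d 0 = ⊥) (hdn : d (Fin.last n) = ⊤) (hdc : ∀ i : Fin n, d i.castSucc ⋖ d i.succ)
    (hJ : ∀ p : L, JoinIrred p → (∃ k, p = c k) ∨ (∃ k, p = d k)) :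
    ∀ i j : Fin n,
      (∃ u : L, MeetIrred u ∧
        SmallestOutside c u (c i.succ) ∧ SmallestOutside d u (d j.succ)) ↔
      (c i.castSucc ⊔ d j.castSucc ≠ c i.succ ⊔ d j.succ ∧
       c i.succ ⊔ d j.succ = c i.castSucc ⊔ d j.succ ∧
       c i.succ ⊔ d j.succ = c i.succ ⊔ d j.castSucc) :=
  pi_two_eq_pi_three_general hM c d hc0 hcc hd0 hdc hJ
end

section
/- For every n ≥ 1 and every permutation π of {1,…,n}, the quotient G_n/β_π (the set of β_π-classes ordered by [a] ≤ [b] iff (a ⊔ b, b) ∈ β_π) is a lattice that is slim, semimodular, and of length n. -/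
/-- The square grid `G_n`: the direct product of two `(n+1)`-element chains. -/
abbrev Grid (n : ℕ) := Fin (n + 1) × Fin (n + 1)

/-- `θ` is a join-congruence: an equivalence relation compatible with `⊔`. -/
def IsJoinCong {S : Type*} [SemilatticeSup S] (θ : S → S → Prop) : Prop :=
  Equivalence θ ∧ ∀ a b c : S, θ a b → θ (a ⊔ c) (b ⊔ c)

/-- The smallest join-congruence containing the relation `R`. -/
def joinCongGen {S : Type*} [SemilatticeSup S] (R : S → S → Prop) : S → S → Prop :=
  fun a b => ∀ θ : S → S → Prop, IsJoinCong θ → (∀ x y, R x y → θ x y) → θ a b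

theorem joinCongGen_equivalence {S : Type*} [SemilatticeSup S] (R : S → S → Prop) :
    Equivalence (joinCongGen R) where
  refl a := fun _θ hθ _ => hθ.1.refl a
  symm h := fun θ hθ hR => hθ.1.symm (h θ hθ hR)
  trans h₁ h₂ := fun θ hθ hR => hθ.1.trans (h₁ θ hθ hR) (h₂ θ hθ hR)

/-- The generating pairs of `β_π`. -/
def betaGen {n : ℕ} (π : Equiv.Perm (Fin n)) : Grid n → Grid n → Prop :=
  fun a b => ∃ i : Fin n,
    (a = (i.castSucc, (π i).succ) ∧ b = (i.succ, (π i).succ)) ∨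
    (a = (i.succ, (π i).castSucc) ∧ b = (i.succ, (π i).succ))

/-- `β_π`, the smallest join-congruence on the grid containing `betaGen π`. -/
def beta {n : ℕ} (π : Equiv.Perm (Fin n)) : Grid n → Grid n → Prop :=
  joinCongGen (betaGen π)

/-- The setoid on the grid determined by `β_π`. -/
def betaSetoid {n : ℕ} (π : Equiv.Perm (Fin n)) : Setoid (Grid n) :=
  ⟨beta π, joinCongGen_equivalence _⟩

/-- The quotient `G_n/β_π`. -/
def QuotGrid {n : ℕ} (π : Equiv.Perm (Fin n)) := Quotient (betaSetoid π)

/-- The order on `G_n/β_π`: `[a] ≤ [b]` iff `(a ⊔ b, b) ∈ β_π`. -/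
instance QuotGrid.instLE {n : ℕ} (π : Equiv.Perm (Fin n)) : LE (QuotGrid π) :=
  ⟨fun x y => ∃ a b : Grid n,
    x = Quotient.mk (betaSetoid π) a ∧ y = Quotient.mk (betaSetoid π) b ∧ beta π (a ⊔ b) b⟩

/-!
The map sending `(x, y)` to `{i | i ≤ x ∨ π i ≤ y}` is a join-homomorphism from `G_n` to the
subsets of `{1, …, n}` whose kernel is exactly `β_π`: it collapses every generating pair, and two
comparable points with the same image are joined by a chain of generating steps, since moving one
coordinate up by one adds at most one element. So `G_n/β_π` is the union-closed family of these
sets ordered by inclusion. Each of them is the union of a member of the chain `{i | i ≤ x}` and a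
member of the chain `{i | π i ≤ y}`, which makes the lattice slim; cardinality is a submodular
rank function that increases by one along covers, which gives semimodularity and length `n`.
-/

open Finset

section JoinCongruence

variable {S : Type*} [SemilatticeSup S]

theorem isJoinCong_ker {T : Type*} [SemilatticeSup T] (f : S → T)
    (hf : ∀ a b, f (a ⊔ b) = f a ⊔ f b) : IsJoinCong fun a b => f a = f b :=
  ⟨⟨fun _ => rfl, Eq.symm, Eq.trans⟩, fun a b c (h : f a = f b) => by
    change f (a ⊔ c) = f (b ⊔ c)
    rw [hf, hf, h]⟩

theorem joinCongGen_sup_of_le {R : S → S → Prop} {a b p : S} (h : R a b) (hap : a ≤ p) :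
    joinCongGen R p (b ⊔ p) := by
  intro θ hθ hR
  simpa only [sup_eq_right.2 hap] using hθ.2 a b p (hR a b h)

end JoinCongruence

open Classical in
noncomputable abbrev Fintype.latticeOfSemilatticeSup (α : Type*) [SemilatticeSup α] [OrderBot α]
    [Fintype α] : Lattice α :=
  { ‹SemilatticeSup α› with
    inf := fun a b => (univ.filter fun c => c ≤ a ∧ c ≤ b).sup id
    inf_le_left a b := Finset.sup_le (s := univ.filter fun c => c ≤ a ∧ c ≤ b) fun _ hc =>
      (mem_filter.1 hc).2.1
    inf_le_right a b := Finset.sup_le (s := univ.filter fun c => c ≤ a ∧ c ≤ b) fun _ hc =>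
      (mem_filter.1 hc).2.2
    le_inf c a b ha hb :=
      Finset.le_sup (s := univ.filter fun c => c ≤ a ∧ c ≤ b) (f := id) (b := c)
        (mem_filter.2 ⟨mem_univ c, ha, hb⟩) }

section Rank

variable {L : Type*}

theorem semimodular_of_rank [Lattice L] (r : L → ℕ) (hr : StrictMono r)
    (hcov : ∀ a b : L, a ⋖ b → r b = r a + 1)
    (hsub : ∀ a b : L, r (a ⊔ b) + r (a ⊓ b) ≤ r a + r b) :
    Semimodular L := by
  intro a b h
  have hab : ¬ a ≤ b := fun hab => h.lt.ne (inf_eq_left.2 hab)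
  have hb : b < a ⊔ b := lt_of_le_of_ne le_sup_right fun e => hab (e ▸ le_sup_left)
  refine ⟨hb, fun c hbc hca => ?_⟩
  have := hcov _ _ h
  have := hsub a b
  have := hr hbc
  have := hr hca
  omega

theorem le_of_strictMono_rank [Preorder L] (r : L → ℕ) (hr : StrictMono r) {n : ℕ}
    (hn : ∀ a, r a ≤ n) {m : ℕ} {x : Fin (m + 1) → L} (hx : StrictMono x) : m ≤ n := by
  have := Fintype.card_le_of_injective
    (fun k => (⟨r (x k), Nat.lt_succ_of_le (hn _)⟩ : Fin (n + 1)))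
    fun k l h => (hr.comp hx).injective (Fin.mk.inj_iff.1 h)
  simpa using this

end Rank

theorem slim_of_forall_eq_sup {L : Type*} [Lattice L] [OrderBot L] {s t : Set L}
    (hs : IsChain (· ≤ ·) s) (ht : IsChain (· ≤ ·) t) (h : ∀ a, ∃ b ∈ s, ∃ c ∈ t, a = b ⊔ c) :
    Slim L := by
  have mem : ∀ a, JoinIrred a → a ∈ s ∨ a ∈ t := fun a ha => by
    obtain ⟨b, hb, c, hc, rfl⟩ := h a
    rcases ha.2 b c rfl with e | e
    · exact .inl (by rwa [e])
    · exact .inr (by rwa [e])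
  rintro ⟨a, b, c, ha, hb, hc, hab, hba, hac, hca, hbc, hcb⟩
  rcases mem a ha with ha | ha <;> rcases mem b hb with hb | hb <;>
    rcases mem c hc with hc | hc
  all_goals first
    | exact (hs.total ha hb).elim hab hba | exact (ht.total ha hb).elim hab hba
    | exact (hs.total ha hc).elim hac hca | exact (ht.total ha hc).elim hac hca
    | exact (hs.total hb hc).elim hbc hcb | exact (ht.total hb hc).elim hbc hcb

variable {n : ℕ} (π : Equiv.Perm (Fin n))

/-- In the paper's 1-based indexing, `gridSet π (x, y) = {i | i ≤ x ∨ π i ≤ y}`. -/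
def gridSet (p : Grid n) : Finset (Fin n) :=
  {i | i.castSucc < p.1 ∨ (π i).castSucc < p.2}

section GridSet

variable {π}

theorem mem_gridSet {p : Grid n} {i : Fin n} :
    i ∈ gridSet π p ↔ i.castSucc < p.1 ∨ (π i).castSucc < p.2 := by
  simp [gridSet]

variable (π)

theorem gridSet_sup (p q : Grid n) : gridSet π (p ⊔ q) = gridSet π p ∪ gridSet π q := by
  ext i
  simp only [mem_union, mem_gridSet, Prod.fst_sup, Prod.snd_sup, lt_sup_iff]
  tauto

theorem gridSet_mono : Monotone (gridSet π) := fun _ _ h _ => by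
  simp only [mem_gridSet]
  exact Or.imp (·.trans_le h.1) (·.trans_le h.2)

theorem gridSet_bot : gridSet π ⊥ = ∅ := by
  ext i
  simp [mem_gridSet]

theorem gridSet_top : gridSet π ⊤ = univ := by
  ext i
  simp [mem_gridSet, Fin.top_eq_last, Fin.castSucc_lt_last]

theorem gridSet_succ_fst (i : Fin n) (y : Fin (n + 1)) :
    gridSet π (i.succ, y) = insert i (gridSet π (i.castSucc, y)) := by
  ext k
  simp only [mem_insert, mem_gridSet, Fin.castSucc_lt_succ_iff, Fin.castSucc_lt_castSucc_iff,
    le_iff_eq_or_lt]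
  tauto

theorem gridSet_succ_snd (j : Fin n) (x : Fin (n + 1)) :
    gridSet π (x, j.succ) = insert (π.symm j) (gridSet π (x, j.castSucc)) := by
  ext k
  simp only [mem_insert, mem_gridSet, Fin.castSucc_lt_succ_iff, Fin.castSucc_lt_castSucc_iff,
    le_iff_eq_or_lt, Equiv.eq_symm_apply]
  tauto

theorem gridSet_eq_of_betaGen {a b : Grid n} (h : betaGen π a b) : gridSet π a = gridSet π b := by
  obtain ⟨i, ⟨rfl, rfl⟩ | ⟨rfl, rfl⟩⟩ := h
  · rw [gridSet_succ_fst, insert_eq_of_mem (mem_gridSet.2 (.inr Fin.castSucc_lt_succ))]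
  · rw [gridSet_succ_snd, Equiv.symm_apply_apply,
      insert_eq_of_mem (mem_gridSet.2 (.inl Fin.castSucc_lt_succ))]

end GridSet

section Kernel

theorem beta_trans {a b c : Grid n} : beta π a b → beta π b c → beta π a c :=
  (joinCongGen_equivalence _).trans

theorem beta_succ_fst {i : Fin n} {y : Fin (n + 1)} (h : i ∈ gridSet π (i.castSucc, y)) :
    beta π (i.castSucc, y) (i.succ, y) := by
  have hy : (π i).castSucc < y := (mem_gridSet.1 h).resolve_left (lt_irrefl _)
  have hgen : betaGen π (i.castSucc, (π i).succ) (i.succ, (π i).succ) := ⟨i, .inl ⟨rfl, rfl⟩⟩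
  have := joinCongGen_sup_of_le hgen (p := (i.castSucc, y))
    ⟨le_rfl, Fin.castSucc_lt_iff_succ_le.1 hy⟩
  rwa [Prod.mk_sup_mk, sup_eq_left.2 Fin.castSucc_lt_succ.le,
    sup_eq_right.2 (Fin.castSucc_lt_iff_succ_le.1 hy)] at this

theorem beta_succ_snd {j : Fin n} {x : Fin (n + 1)} (h : π.symm j ∈ gridSet π (x, j.castSucc)) :
    beta π (x, j.castSucc) (x, j.succ) := by
  have hx : (π.symm j).castSucc < x := (mem_gridSet.1 h).resolve_right (by simp)
  have hgen : betaGen π ((π.symm j).succ, (π (π.symm j)).castSucc)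
      ((π.symm j).succ, (π (π.symm j)).succ) := ⟨π.symm j, .inr ⟨rfl, rfl⟩⟩
  have := joinCongGen_sup_of_le hgen (p := (x, j.castSucc))
    ⟨Fin.castSucc_lt_iff_succ_le.1 hx, by simp⟩
  rwa [Prod.mk_sup_mk, Equiv.apply_symm_apply, sup_eq_right.2 (Fin.castSucc_lt_iff_succ_le.1 hx),
    sup_eq_left.2 Fin.castSucc_lt_succ.le] at this

/-- `p'` moves one coordinate of `p` up by one; when this adds no new element, `(p, p')` is a
generating pair joined with `p`. -/
theorem exists_gridSet_step {p q : Grid n} (hpq : p < q) :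
    ∃ i p', p < p' ∧ p' ≤ q ∧ gridSet π p' = insert i (gridSet π p) ∧
      (i ∈ gridSet π p → beta π p p') := by
  obtain ⟨x, y⟩ := p
  rcases Prod.lt_iff.1 hpq with ⟨hx, hy⟩ | ⟨hx, hy⟩
  · obtain ⟨i, rfl⟩ := Fin.exists_castSucc_eq.2 (hx.trans_le (Fin.le_last _)).ne
    exact ⟨i, (i.succ, y), Prod.lt_iff.2 (.inl ⟨Fin.castSucc_lt_succ, le_rfl⟩),
      ⟨Fin.castSucc_lt_iff_succ_le.1 hx, hy⟩, gridSet_succ_fst π i y, beta_succ_fst π⟩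
  · obtain ⟨j, rfl⟩ := Fin.exists_castSucc_eq.2 (hy.trans_le (Fin.le_last _)).ne
    exact ⟨π.symm j, (x, j.succ), Prod.lt_iff.2 (.inr ⟨le_rfl, Fin.castSucc_lt_succ⟩),
      ⟨hx, Fin.castSucc_lt_iff_succ_le.1 hy⟩, gridSet_succ_snd π j x, beta_succ_snd π⟩

theorem beta_of_le_of_gridSet_eq {p q : Grid n} (hpq : p ≤ q) (h : gridSet π p = gridSet π q) :
    beta π p q := by
  induction p using WellFoundedGT.induction with
  | _ p ih =>
    rcases hpq.lt_or_eq with hlt | rfl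
    · obtain ⟨i, p', hpp', hp'q, hins, hbeta⟩ := exists_gridSet_step π hlt
      have hp' : gridSet π p' = gridSet π p :=
        le_antisymm (h ▸ gridSet_mono π hp'q) (gridSet_mono π hpp'.le)
      have hi : i ∈ gridSet π p := hp' ▸ hins ▸ mem_insert_self i _
      exact beta_trans π (hbeta hi) (ih p' hpp' hp'q (hp'.trans h))
    · exact (joinCongGen_equivalence _).refl p

theorem exists_gridSet_eq_insert {p q : Grid n} (hpq : p ≤ q) (h : gridSet π p ≠ gridSet π q) :
    ∃ p' i, p' ≤ q ∧ i ∉ gridSet π p ∧ gridSet π p' = insert i (gridSet π p) := by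
  induction p using WellFoundedGT.induction with
  | _ p ih =>
    obtain ⟨i, p', hpp', hp'q, hins, -⟩ :=
      exists_gridSet_step π (hpq.lt_of_ne (by rintro rfl; simp at h))
    by_cases hi : i ∈ gridSet π p
    · rw [insert_eq_of_mem hi] at hins
      simpa only [hins] using ih p' hpp' hp'q (hins ▸ h)
    · exact ⟨p', i, hp'q, hi, hins⟩

theorem beta_iff_gridSet_eq {p q : Grid n} : beta π p q ↔ gridSet π p = gridSet π q := by
  refine ⟨fun h => h _ (isJoinCong_ker _ (gridSet_sup π)) fun _ _ => gridSet_eq_of_betaGen π,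
    fun h => beta_trans π (beta_of_le_of_gridSet_eq π le_sup_left ?_)
      ((joinCongGen_equivalence _).symm (beta_of_le_of_gridSet_eq π le_sup_right ?_))⟩ <;>
    rw [gridSet_sup, h, union_self]

theorem quotGrid_mk_le_mk {p q : Grid n} :
    LE.le (α := QuotGrid π) (Quotient.mk _ p) (Quotient.mk _ q) ↔
      gridSet π p ⊆ gridSet π q := by
  have key : ∀ a b : Grid n, beta π (a ⊔ b) b ↔ gridSet π a ⊆ gridSet π b := fun a b => by
    rw [beta_iff_gridSet_eq, gridSet_sup, union_eq_right]
  refine ⟨fun ⟨a, b, hpa, hqb, hab⟩ => ?_, fun h => ⟨p, q, rfl, rfl, (key p q).2 h⟩⟩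
  rw [(beta_iff_gridSet_eq π).1 (Quotient.exact hpa),
    (beta_iff_gridSet_eq π).1 (Quotient.exact hqb)]
  exact (key a b).1 hab

end Kernel

def GridSets : Set (Finset (Fin n)) := Set.range (gridSet π)

namespace GridSets

instance : Fintype (GridSets π) := Set.fintypeRange _

instance : SemilatticeSup (GridSets π) :=
  Subtype.semilatticeSup <| by
    rintro _ _ ⟨p, rfl⟩ ⟨q, rfl⟩
    exact ⟨p ⊔ q, gridSet_sup π p q⟩

instance : BoundedOrder (GridSets π) :=
  Subtype.boundedOrder ⟨⊥, gridSet_bot π⟩ ⟨⊤, gridSet_top π⟩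

noncomputable instance : Lattice (GridSets π) := Fintype.latticeOfSemilatticeSup _

def mk (p : Grid n) : GridSets π := ⟨gridSet π p, p, rfl⟩

@[simp]
theorem val_mk (p : Grid n) : (mk π p).1 = gridSet π p := rfl

theorem mk_mono : Monotone (mk π) := fun _ _ h => gridSet_mono π h

theorem mk_fst_strictMono : StrictMono fun x : Fin (n + 1) => mk π (x, ⊥) :=
  Fin.strictMono_iff_lt_succ.2 fun i => by
    change gridSet π _ ⊂ gridSet π _
    rw [gridSet_succ_fst]
    exact ssubset_insert (by simp [mem_gridSet])

theorem card_of_covBy {a b : GridSets π} (h : a ⋖ b) : #b.1 = #a.1 + 1 := by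
  obtain ⟨_, p, rfl⟩ := a
  obtain ⟨_, q, rfl⟩ := b
  change mk π p ⋖ mk π q at h
  have hq : gridSet π (p ⊔ q) = gridSet π q := gridSet_sup π p q ▸ union_eq_right.2 h.le
  obtain ⟨p', i, hp'q, hi, hp'⟩ := exists_gridSet_eq_insert π (le_sup_left : p ≤ p ⊔ q)
    (hq ▸ fun e => h.lt.ne (Subtype.ext e))
  have hle : mk π p ≤ mk π p' := show gridSet π p ⊆ gridSet π p' from hp' ▸ subset_insert i _
  have hge : mk π p' ≤ mk π q := show gridSet π p' ⊆ gridSet π q from hq ▸ gridSet_mono π hp'q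
  rcases h.wcovBy.eq_or_eq hle hge with e | e <;> have e := congrArg Subtype.val e <;>
    simp only [val_mk, hp'] at e ⊢
  · exact absurd (e ▸ mem_insert_self i _) hi
  · rw [← e, card_insert_of_notMem hi]

theorem semimodular : Semimodular (GridSets π) :=
  semimodular_of_rank (fun a => #a.1) (fun _ _ h => card_lt_card h) (fun _ _ => card_of_covBy π)
    fun a b => by
      have := card_le_card (subset_inter (inf_le_left : a ⊓ b ≤ a) (inf_le_right : a ⊓ b ≤ b))
      have := card_union_add_card_inter a.1 b.1
      change #(a.1 ∪ b.1) + _ ≤ _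
      omega

theorem slim : Slim (GridSets π) := by
  have hrow : Monotone fun y : Fin (n + 1) => mk π (⊥, y) := fun _ _ h => mk_mono π ⟨le_rfl, h⟩
  refine slim_of_forall_eq_sup (mk_fst_strictMono π).monotone.isChain_range hrow.isChain_range ?_
  rintro ⟨_, p, rfl⟩
  refine ⟨_, ⟨p.1, rfl⟩, _, ⟨p.2, rfl⟩, Subtype.ext ?_⟩
  change gridSet π p = gridSet π (p.1, ⊥) ∪ gridSet π (⊥, p.2)
  rw [← gridSet_sup]
  simp

theorem hasLength : HasLength (GridSets π) n :=
  ⟨⟨_, mk_fst_strictMono π⟩, fun _ _ hx =>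
    le_of_strictMono_rank (fun a : GridSets π => #a.1) (fun _ _ h => card_lt_card h)
      (fun a => (card_le_univ a.1).trans_eq (Fintype.card_fin n)) hx⟩

end GridSets

noncomputable def quotGridOrderIso : QuotGrid π ≃o GridSets π where
  toEquiv := Equiv.ofBijective
    (Quotient.lift (GridSets.mk π) fun _ _ h => Subtype.ext ((beta_iff_gridSet_eq π).1 h))
    ⟨fun x y => Quotient.inductionOn₂ x y fun _ _ h =>
        Quotient.sound ((beta_iff_gridSet_eq π).2 (congrArg Subtype.val h)),
      fun ⟨_, p, hp⟩ => ⟨Quotient.mk _ p, Subtype.ext hp⟩⟩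
  map_rel_iff' {x y} := Quotient.inductionOn₂ x y fun _ _ => (quotGrid_mk_le_mk π).symm

theorem quotGrid_slim_semimodular_general {n : ℕ} (π : Equiv.Perm (Fin n)) :
    ∃ (L : Type) (_ : Lattice L) (_ : Fintype L) (_ : BoundedOrder L),
      Slim L ∧ Semimodular L ∧ HasLength L n ∧ Nonempty (QuotGrid π ≃o L) :=
  ⟨GridSets π, inferInstance, inferInstance, inferInstance, GridSets.slim π,
    GridSets.semimodular π, GridSets.hasLength π, ⟨quotGridOrderIso π⟩⟩

/-- for every permutation `π` of `{1,…,n}` (`n ≥ 1`), the quotient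
`G_n/β_π` is a slim semimodular lattice of length `n`; that is, it is
order-isomorphic to one. -/
theorem quotGrid_slim_semimodular {n : ℕ} (hn : 1 ≤ n) (π : Equiv.Perm (Fin n)) :
    ∃ (L : Type) (_ : Lattice L) (_ : Fintype L) (_ : BoundedOrder L),
      Slim L ∧ Semimodular L ∧ HasLength L n ∧ Nonempty (QuotGrid π ≃o L) :=
  quotGrid_slim_semimodular_general π
end
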